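/- Let x = ξ_1/2 + ... + ξ_m/2^m be an m-bit number in [0,1) and define φ(x) = Σ_{j=0}^{m-1} 2^{-j} Σ_{k=2^j}^{2^{j+1}-1} wal_k(x). Then φ(x) = m if x = 0, and φ(x) = i_0 - 2 if the first nonzero binary digit of x is ξ_{i_0} (i.e., ξ_1 = ... = ξ_{i_0-1} = 0 and ξ_{i_0} = 1). -/

import Mathlib

/-- the `i`-th dyadic digit `ξ_i` of `x ∈ [0,1)` (for `i ≥ 1`). -/
noncomputable def dyadicDigit (x : ℝ) (i : ℕ) : ℕ := (Int.toNat ⌊x * 2 ^ i⌋) % 2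

/-- the `k`-th dyadic Walsh function. -/
noncomputable def walsh (k : ℕ) (x : ℝ) : ℝ :=
  (-1) ^ (∑ i ∈ Finset.range (Nat.size k), if Nat.testBit k i then dyadicDigit x (i + 1) else 0)

/-- `φ(x) = Σ_{j=0}^{m-1} 2^{-j} Σ_{k=2^j}^{2^{j+1}-1} wal_k(x)`. -/
noncomputable def phiWal (m : ℕ) (x : ℝ) : ℝ :=
  ∑ j ∈ Finset.range m, (1 / 2 ^ j : ℝ) * ∑ k ∈ Finset.Icc (2 ^ j) (2 ^ (j + 1) - 1), walsh k x

/-! For `t < 2 ^ j` one has `wal_{2^j + t} = (-1)^{ξ_{j+1}} wal_t`, so the `j`-th block sum is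
`(-1)^{ξ_{j+1}} ∏_{i ≤ j} (1 + (-1)^{ξ_i})`. After the factor `2^{-j}` the `j`-th term of `φ` is
therefore `(-1)^{ξ_{j+1}}` if `ξ_1 = ⋯ = ξ_j = 0` and `0` otherwise: all `m` terms equal `1` at
`x = 0`, while for a first nonzero digit `ξ_{i_0}` the terms are `i_0 - 1` ones, one `-1`, then
zeros. The digits of `∑ ξ_l / 2^l` are the `ξ_l` because the tail beyond any position is `< 1`. -/

noncomputable def binaryFraction (ξ : ℕ → ℕ) (m : ℕ) : ℝ :=
  ∑ l ∈ Finset.range m, (ξ (l + 1) : ℝ) / 2 ^ (l + 1)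

lemma binaryFraction_succ (ξ : ℕ → ℕ) (m : ℕ) :
    binaryFraction ξ (m + 1) = (ξ 1 + binaryFraction (fun l => ξ (l + 1)) m) / 2 := by
  simp only [binaryFraction, Finset.sum_range_succ', add_div, Finset.sum_div, pow_succ]
  simp only [div_div]
  ring

lemma binaryFraction_nonneg (ξ : ℕ → ℕ) (m : ℕ) : 0 ≤ binaryFraction ξ m :=
  Finset.sum_nonneg fun _ _ => by positivity

lemma binaryFraction_lt_one {ξ : ℕ → ℕ} (hξ : ∀ l, ξ l ≤ 1) (m : ℕ) :
    binaryFraction ξ m < 1 := by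
  induction m generalizing ξ with
  | zero => simp [binaryFraction]
  | succ m ih =>
    have h1 : (ξ 1 : ℝ) ≤ 1 := by exact_mod_cast hξ 1
    have h2 := ih fun l => hξ (l + 1)
    rw [binaryFraction_succ]
    linarith

lemma dyadicDigit_succ (x : ℝ) (i : ℕ) : dyadicDigit x (i + 1) = dyadicDigit (2 * x) i := by
  rw [dyadicDigit, dyadicDigit, pow_succ, mul_comm 2 x, mul_assoc, mul_comm 2 (2 ^ i)]

lemma dyadicDigit_natCast_add (n : ℕ) {y : ℝ} (hy : 0 ≤ y) {i : ℕ} (hi : i ≠ 0) :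
    dyadicDigit (n + y) i = dyadicDigit y i := by
  obtain ⟨k, rfl⟩ : ∃ k, i = k + 1 := ⟨i - 1, by omega⟩
  have hfloor : ⌊(n + y) * 2 ^ (k + 1)⌋ = ((n * 2 ^ (k + 1) : ℕ) : ℤ) + ⌊y * 2 ^ (k + 1)⌋ := by
    rw [add_mul, ← Int.floor_natCast_add]
    push_cast
    rfl
  have hnonneg : 0 ≤ ⌊y * 2 ^ (k + 1)⌋ := Int.floor_nonneg.mpr (by positivity)
  rw [dyadicDigit, dyadicDigit, hfloor, Int.toNat_add (by positivity) hnonneg, Int.toNat_natCast,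
    pow_succ, ← mul_assoc, Nat.mul_add_mod']

lemma dyadicDigit_half_add {d : ℕ} (hd : d ≤ 1) {y : ℝ} (hy0 : 0 ≤ y) (hy1 : y < 1) :
    dyadicDigit ((d + y) / 2) 1 = d := by
  rw [dyadicDigit, pow_one, div_mul_cancel₀ _ two_ne_zero, Int.floor_natCast_add,
    Int.floor_eq_zero_iff.mpr ⟨hy0, hy1⟩, add_zero, Int.toNat_natCast]
  omega

theorem dyadicDigit_binaryFraction {ξ : ℕ → ℕ} (hξ : ∀ l, ξ l ≤ 1) {m i : ℕ} (hi : 1 ≤ i)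
    (him : i ≤ m) : dyadicDigit (binaryFraction ξ m) i = ξ i := by
  induction m generalizing ξ i with
  | zero => omega
  | succ m ih =>
    rw [binaryFraction_succ]
    match i, hi with
    | 1, _ =>
      exact dyadicDigit_half_add (hξ 1) (binaryFraction_nonneg _ m)
        (binaryFraction_lt_one (fun l => hξ (l + 1)) m)
    | k + 2, _ =>
      rw [dyadicDigit_succ, mul_div_cancel₀ _ two_ne_zero,
        dyadicDigit_natCast_add _ (binaryFraction_nonneg _ m) (Nat.succ_ne_zero k),
        ih (fun l => hξ (l + 1)) (Nat.le_add_left 1 k) (by omega)]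

lemma walsh_eq_pow_sum_range {k n : ℕ} (hk : k < 2 ^ n) (x : ℝ) :
    walsh k x = (-1) ^ (∑ i ∈ Finset.range n,
      if Nat.testBit k i then dyadicDigit x (i + 1) else 0) := by
  rw [walsh]
  congr 1
  refine Finset.sum_subset (Finset.range_subset_range.mpr (Nat.size_le.mpr hk)) fun i _ hi => ?_
  rw [Finset.mem_range, not_lt, Nat.size_le] at hi
  rw [Nat.testBit_lt_two_pow hi, if_neg Bool.false_ne_true]

lemma walsh_two_pow_add {j t : ℕ} (ht : t < 2 ^ j) (x : ℝ) :
    walsh (2 ^ j + t) x = (-1) ^ dyadicDigit x (j + 1) * walsh t x := by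
  have ht' : t < 2 ^ (j + 1) := ht.trans (Nat.pow_lt_pow_succ one_lt_two)
  have hjt : 2 ^ j + t < 2 ^ (j + 1) := by rw [pow_succ]; omega
  rw [walsh_eq_pow_sum_range hjt, walsh_eq_pow_sum_range ht', Finset.sum_range_succ,
    Finset.sum_range_succ, Nat.testBit_two_pow_add_eq, Nat.testBit_lt_two_pow ht,
    Finset.sum_congr rfl fun i hi => by rw [Nat.testBit_two_pow_add_gt (Finset.mem_range.mp hi)]]
  simp [pow_add, mul_comm]

theorem sum_walsh_range_two_pow (x : ℝ) (j : ℕ) :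
    ∑ k ∈ Finset.range (2 ^ j), walsh k x =
      ∏ i ∈ Finset.range j, (1 + (-1) ^ dyadicDigit x (i + 1)) := by
  induction j with
  | zero => simp [walsh]
  | succ j ih =>
    rw [pow_succ, mul_two, Finset.sum_range_add,
      Finset.sum_congr rfl fun t ht => walsh_two_pow_add (Finset.mem_range.mp ht) x,
      ← Finset.mul_sum, ih, Finset.prod_range_succ]
    ring

theorem sum_walsh_Icc_two_pow (x : ℝ) (j : ℕ) :
    ∑ k ∈ Finset.Icc (2 ^ j) (2 ^ (j + 1) - 1), walsh k x =
      (-1) ^ dyadicDigit x (j + 1) * ∏ i ∈ Finset.range j, (1 + (-1) ^ dyadicDigit x (i + 1)) := by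
  have hIcc : Finset.Icc (2 ^ j) (2 ^ (j + 1) - 1) = Finset.Ico (2 ^ j) (2 ^ j + 2 ^ j) := by
    rw [← Finset.Ico_add_one_right_eq_Icc, pow_succ]
    congr 1
    have := Nat.one_le_two_pow (n := j)
    omega
  rw [hIcc, Finset.sum_Ico_eq_sum_range, Nat.add_sub_cancel,
    Finset.sum_congr rfl fun t ht => walsh_two_pow_add (Finset.mem_range.mp ht) x,
    ← Finset.mul_sum, sum_walsh_range_two_pow]

theorem phiWal_eq_sum_prod (m : ℕ) (x : ℝ) :
    phiWal m x = ∑ j ∈ Finset.range m,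
      (-1) ^ dyadicDigit x (j + 1) *
        ∏ i ∈ Finset.range j, (1 + (-1) ^ dyadicDigit x (i + 1)) / 2 := by
  refine Finset.sum_congr rfl fun j _ => ?_
  rw [sum_walsh_Icc_two_pow, Finset.prod_div_distrib, Finset.prod_const, Finset.card_range]
  ring

lemma prod_digit_factor_eq_one {x : ℝ} {j : ℕ} (h : ∀ i < j, dyadicDigit x (i + 1) = 0) :
    ∏ i ∈ Finset.range j, (1 + (-1 : ℝ) ^ dyadicDigit x (i + 1)) / 2 = 1 :=
  Finset.prod_eq_one fun i hi => by rw [h i (Finset.mem_range.mp hi)]; norm_num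

theorem phiWal_zero (m : ℕ) : phiWal m 0 = m := by
  have hdigit : ∀ i, dyadicDigit 0 i = 0 := by simp [dyadicDigit]
  rw [phiWal_eq_sum_prod, Finset.sum_congr rfl fun j _ => by
    rw [prod_digit_factor_eq_one fun i _ => hdigit (i + 1), hdigit, pow_zero, one_mul]]
  simp

theorem phiWal_of_first_one {m i0 : ℕ} {x : ℝ} (hi0 : 1 ≤ i0) (hi0m : i0 ≤ m)
    (hzero : ∀ l, 1 ≤ l → l < i0 → dyadicDigit x l = 0) (hone : dyadicDigit x i0 = 1) :
    phiWal m x = (i0 : ℝ) - 2 := by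
  obtain ⟨k, rfl⟩ := Nat.exists_eq_add_of_le' hi0
  obtain ⟨n, rfl⟩ := Nat.exists_eq_add_of_le hi0m
  have hprefix : ∀ j ≤ k, ∏ i ∈ Finset.range j, (1 + (-1 : ℝ) ^ dyadicDigit x (i + 1)) / 2 = 1 :=
    fun j hj => prod_digit_factor_eq_one fun i hi => hzero (i + 1) (by omega) (by omega)
  have hhead : ∀ j ∈ Finset.range k, (-1) ^ dyadicDigit x (j + 1) *
      ∏ i ∈ Finset.range j, (1 + (-1 : ℝ) ^ dyadicDigit x (i + 1)) / 2 = 1 := fun j hj => by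
    have hj := Finset.mem_range.mp hj
    rw [hprefix j hj.le, hzero (j + 1) (by omega) (by omega), pow_zero, one_mul]
  have htail : ∀ s ∈ Finset.range n, (-1) ^ dyadicDigit x (k + 1 + s + 1) *
      ∏ i ∈ Finset.range (k + 1 + s), (1 + (-1 : ℝ) ^ dyadicDigit x (i + 1)) / 2 = 0 :=
    fun s _ => by
      rw [Finset.prod_eq_zero (Finset.mem_range.mpr (by omega : k < k + 1 + s)) (by
        rw [hone]; norm_num), mul_zero]
  rw [phiWal_eq_sum_prod, Finset.sum_range_add, Finset.sum_range_succ, Finset.sum_congr rfl hhead,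
    Finset.sum_congr rfl htail, hprefix k le_rfl, hone, Finset.sum_const, Finset.card_range,
    nsmul_eq_mul, Finset.sum_const_zero]
  push_cast
  ring

theorem phiWal_eval_general (m : ℕ) (ξ : ℕ → ℕ) (hξ : ∀ l, ξ l ≤ 1) (x : ℝ)
    (hx : x = ∑ l ∈ Finset.range m, (ξ (l + 1) : ℝ) / 2 ^ (l + 1)) :
    (x = 0 → phiWal m x = m) ∧
      (∀ i0, 1 ≤ i0 → i0 ≤ m → (∀ l, 1 ≤ l → l < i0 → ξ l = 0) → ξ i0 = 1 →
        phiWal m x = (i0 : ℝ) - 2) := by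
  refine ⟨fun hx0 => hx0 ▸ phiWal_zero m, fun i0 hi0 hi0m hzero hone => ?_⟩
  have hdigit : ∀ i, 1 ≤ i → i ≤ m → dyadicDigit x i = ξ i := fun i hi him =>
    hx ▸ dyadicDigit_binaryFraction hξ hi him
  exact phiWal_of_first_one hi0 hi0m
    (fun l hl hli0 => (hdigit l hl (by omega)).trans (hzero l hl hli0))
    ((hdigit i0 hi0 hi0m).trans hone)

theorem phiWal_eval (m : ℕ) (hm : 1 ≤ m) (ξ : ℕ → ℕ) (hξ : ∀ l, ξ l ≤ 1) (x : ℝ)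
    (hx : x = ∑ l ∈ Finset.range m, (ξ (l + 1) : ℝ) / 2 ^ (l + 1)) :
    (x = 0 → phiWal m x = m) ∧
      (∀ i0, 1 ≤ i0 → i0 ≤ m → (∀ l, 1 ≤ l → l < i0 → ξ l = 0) → ξ i0 = 1 →
        phiWal m x = (i0 : ℝ) - 2) :=
  phiWal_eval_general m ξ hξ x hx
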